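/- Let n ≥ 2 be an integer, α > 0, p ∈ {1,…,n−1} coprime to n, and g a real number with M = 2πp/α − ng ≠ 0. Then every lattice point ρ_p + sgn(M)·μ with μ ∈ Λ⁺_{p,|M|} belongs to the simplex Σ̄_{g,p}. -/

import Mathlib

noncomputable section
open Real Finset
open scoped Classical

/-- The standard basis vector `e_j` of `ℝⁿ` (1-based index), extended `n`-periodically
(`e_{n+j} = e_j`). -/
def ee (n j : ℕ) : Fin n → ℝ := fun i => if ((i : ℕ) + 1) % n = j % n then 1 else 0

/-- The standard inner product on `ℝⁿ`. -/
def inn {n : ℕ} (x y : Fin n → ℝ) : ℝ := ∑ i, x i * y i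

/-- The coordinate `x_j` (1-based index) with the convention `x_{n+k} = x_k - 2π/α`. -/
def coord {n : ℕ} (α : ℝ) (x : Fin n → ℝ) (j : ℕ) : ℝ :=
  if h : 0 < n then x ⟨(j - 1) % n, Nat.mod_lt _ h⟩ - 2 * π / α * (((j - 1) / n : ℕ) : ℝ)
  else 0

/-- The simple roots `a_{j,p} = e_j - e_{j+p}`. -/
def aa (n p j : ℕ) : Fin n → ℝ := ee n j - ee n (j + p)

/-- The closed simplex `Σ̄_{g,p} = {x ∈ E_n : sgn(M)(x_j - x_{j+p} - g) ≥ 0, j = 1,…,n}`,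
where `M = 2πp/α - ng`. -/
def SigmaBar (n p : ℕ) (α g : ℝ) : Set (Fin n → ℝ) :=
  {x | (∑ i, x i) = 0 ∧ ∀ j ∈ Icc 1 n,
    0 ≤ Real.sign (2 * π * p / α - n * g) * (coord α x j - coord α x (j + p) - g)}

/-- The interior `Σ_{g,p}` of the simplex, cut out by the strict inequalities. -/
def SigmaInt (n p : ℕ) (α g : ℝ) : Set (Fin n → ℝ) :=
  {x | (∑ i, x i) = 0 ∧ ∀ j ∈ Icc 1 n,
    0 < Real.sign (2 * π * p / α - n * g) * (coord α x j - coord α x (j + p) - g)}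

/-- `g` is a type (i) coupling, with `q ∈ {1,…,n-1}` the multiplicative inverse of `p` mod `n`. -/
def TypeI (n p q : ℕ) (α g : ℝ) : Prop :=
  1 ≤ q ∧ q ≤ n - 1 ∧ (p * q) % n = 1 % n ∧
  ((2 * π / α * ((p : ℝ) / n - 1 / ((n : ℝ) * q)) < g ∧ g < 2 * π / α * ((p : ℝ) / n)) ∨
   (2 * π / α * ((p : ℝ) / n) < g ∧
      g < 2 * π / α * ((p : ℝ) / n + 1 / ((n : ℝ) * ((n : ℝ) - q)))))

/-- `ρ_p = g(ω_{1,p}+…+ω_{n-p,p}) + (g - 2π/α)(ω_{n-p+1,p}+…+ω_{n-1,p})`. -/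
def rhoP (n p : ℕ) (α g : ℝ) (ω : ℕ → Fin n → ℝ) : Fin n → ℝ :=
  g • (∑ j ∈ Icc 1 (n - p), ω j) + (g - 2 * π / α) • (∑ j ∈ Icc (n - p + 1) (n - 1), ω j)

/-- `Λ⁺_{p,|M|}`: nonnegative integral combinations of the `ω_{j,p}` with coefficient sum `≤ |M|`. -/
def Lam (n : ℕ) (Mabs : ℝ) (ω : ℕ → Fin n → ℝ) : Set (Fin n → ℝ) :=
  {μ | ∃ m : ℕ → ℕ, (∑ j ∈ Icc 1 (n - 1), (m j : ℝ)) ≤ Mabs ∧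
    μ = ∑ j ∈ Icc 1 (n - 1), (m j : ℝ) • ω j}

/-- The fundamental weight `ω_r = e_1+…+e_r - (r/n)(e_1+…+e_n)`. -/
def omegaStd (n r : ℕ) : Fin n → ℝ :=
  fun i => (if (i : ℕ) + 1 ≤ r then 1 else 0) - (r : ℝ) / n

/-- Membership in the orbit `S_n(ω_r)` of `ω_r` under coordinate permutations. -/
def inOrbit (n r : ℕ) (ν : Fin n → ℝ) : Prop :=
  ∃ σ : Equiv.Perm (Fin n), ν = fun i => omegaStd n r (σ i)

/-- The orbit `S_n(ω_r)` as a finite set. -/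
def orbitF (n r : ℕ) : Finset (Fin n → ℝ) :=
  Finset.image (fun σ : Equiv.Perm (Fin n) => fun i => omegaStd n r (σ i)) Finset.univ

/-- `V_ν(g;x) = ∏_{a ∈ A_{n-1}, ⟨a,ν⟩=1} sin(α(⟨a,x⟩+g)/2)/sin(α⟨a,x⟩/2)`. -/
def Vnu (n : ℕ) (α g : ℝ) (ν x : Fin n → ℝ) : ℝ :=
  ∏ j ∈ Icc 1 n, ∏ k ∈ Icc 1 n,
    if j ≠ k ∧ inn (ee n j - ee n k) ν = 1 then
      Real.sin (α * (inn (ee n j - ee n k) x + g) / 2) /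
        Real.sin (α * inn (ee n j - ee n k) x / 2)
    else 1

/-- `V_J(g;x) = ∏_{j∈J, k∉J} sin(α(x_j-x_k+g)/2)/sin(α(x_j-x_k)/2)`. -/
def VJ (n : ℕ) (α g : ℝ) (J : Finset ℕ) (x : Fin n → ℝ) : ℝ :=
  ∏ j ∈ J, ∏ k ∈ Icc 1 n \ J,
    Real.sin (α * (coord α x j - coord α x k + g) / 2) /
      Real.sin (α * (coord α x j - coord α x k) / 2)

/-- `F_J(g;x) = ∏_{j,k∈J, j≠k} sin(α(x_j-x_k)/2)/sin(α(x_j-x_k+g)/2)`. -/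
def FJ (n : ℕ) (α g : ℝ) (J : Finset ℕ) (x : Fin n → ℝ) : ℝ :=
  ∏ j ∈ J, ∏ k ∈ J,
    if j ≠ k then
      Real.sin (α * (coord α x j - coord α x k) / 2) /
        Real.sin (α * (coord α x j - coord α x k + g) / 2)
    else 1

/-- The trigonometric Pochhammer symbol `(z : sin_α)_m`. -/
def poch (α z : ℝ) (m : ℤ) : ℝ :=
  if 0 ≤ m then ∏ l ∈ Finset.range m.toNat, Real.sin (α * (z + l) / 2)
  else 1 / ∏ l ∈ Finset.Icc 1 (-m).toNat, Real.sin (α * (z - l) / 2)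

/-- Membership in the set of positive roots `A⁺_{n-1,p}`. -/
def inPosRoots (n p : ℕ) (v : Fin n → ℝ) : Prop :=
  (∃ j ∈ Icc 1 n, ∃ k ∈ Icc 1 n, j ≠ k ∧ v = ee n j - ee n k) ∧
  ∃ c : ℕ → ℕ, v = ∑ j ∈ Icc 1 (n - 1), (c j : ℝ) • aa n p j

/-- The lattice function `Δ_p(μ)`. -/
def Delta (n p : ℕ) (α g : ℝ) (ω : ℕ → Fin n → ℝ) (μ : Fin n → ℝ) : ℝ :=
  ∏ j ∈ Icc 1 n, ∏ k ∈ Icc 1 n,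
    if inPosRoots n p (ee n j - ee n k) then
      Real.sin (α * inn (ee n j - ee n k)
          (rhoP n p α g ω + Real.sign (2 * π * p / α - n * g) • μ) / 2) /
        Real.sin (α * inn (ee n j - ee n k) (rhoP n p α g ω) / 2) *
      (poch α (inn (ee n j - ee n k) (rhoP n p α g ω) +
            Real.sign (2 * π * p / α - n * g) * g)
          ⌊Real.sign (2 * π * p / α - n * g) * inn (ee n j - ee n k) μ⌋ /
        poch α (inn (ee n j - ee n k) (rhoP n p α g ω) + 1 -
            Real.sign (2 * π * p / α - n * g) * g)
          ⌊Real.sign (2 * π * p / α - n * g) * inn (ee n j - ee n k) μ⌋)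
    else 1

/-- The coefficient `W_ν(ρ_p + sgn(M)μ)` (equal to `0` when `μ + ν ∉ Λ⁺_{p,|M|}`). -/
def Wmu (n p : ℕ) (α g : ℝ) (ω : ℕ → Fin n → ℝ) (s : (Fin n → ℝ) → ℝ)
    (μ ν : Fin n → ℝ) : ℝ :=
  if μ + ν ∈ Lam n |2 * π * p / α - n * g| ω then
    s ν * Real.sqrt
      (Vnu n α g ν (rhoP n p α g ω + Real.sign (2 * π * p / α - n * g) • μ) *
       Vnu n α g ν (-(rhoP n p α g ω) - Real.sign (2 * π * p / α - n * g) • (μ + ν)))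
  else 0

/-- The discrete difference operator `Ŝ_{r,M}` acting on lattice functions. -/
def SOp (n p r : ℕ) (α g : ℝ) (ω : ℕ → Fin n → ℝ) (s : (Fin n → ℝ) → ℝ)
    (φ : (Fin n → ℝ) → ℂ) : (Fin n → ℝ) → ℂ :=
  fun x => ∑ ν ∈ orbitF n r,
    (Wmu n p α g ω s (Real.sign (2 * π * p / α - n * g) • (x - rhoP n p α g ω)) ν : ℂ) *
      φ (x + Real.sign (2 * π * p / α - n * g) • ν)

/-- The inner product `(φ, ψ)_{p,M}` on lattice functions. -/
def ip (n p : ℕ) (α g : ℝ) (ω : ℕ → Fin n → ℝ) (φ ψ : (Fin n → ℝ) → ℂ) : ℂ :=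
  ∑ᶠ μ ∈ Lam n |2 * π * p / α - n * g| ω,
    φ (rhoP n p α g ω + Real.sign (2 * π * p / α - n * g) • μ) *
      starRingEnd ℂ (ψ (rhoP n p α g ω + Real.sign (2 * π * p / α - n * g) • μ))

/-- The elementary symmetric function `ℰ_r(u) = Σ_{ν ∈ S_n(ω_r)} exp(iα⟨ν,u⟩)`. -/
def calE (n r : ℕ) (α : ℝ) (u : Fin n → ℝ) : ℂ :=
  ∑ ν ∈ orbitF n r, Complex.exp (Complex.I * (α : ℂ) * (inn ν u : ℂ))


/-! Write `x = ρ_p + sgn(M) μ` in the basis `ω_{k,p}`. By the duality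
`⟨a_{j,p}, ω_{k,p}⟩ = δ_{jk}`, for `j < n` the difference `x_j - x_{j+p} - g` equals
`sgn(M) m_j`: the `-2π/α` in the coefficients of `ρ_p` is exactly cancelled by the convention
`x_{n+k} = x_k - 2π/α`. The same convention makes the `n` differences `x_j - x_{j+p}` sum to
`2πp/α`, so the last one is `M - sgn(M) ∑ m_j`, and `sgn(M)` times it is nonnegative because
`∑ m_j ≤ |M|`. -/

variable {n : ℕ}

lemma Real.sign_mul_sign_mul_nonneg (r : ℝ) {t : ℝ} (ht : 0 ≤ t) :
    0 ≤ Real.sign r * (Real.sign r * t) := by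
  rw [← mul_assoc]
  exact mul_nonneg (mul_self_nonneg _) ht

lemma Real.sign_mul_sub_sign_mul_nonneg {r t : ℝ} (ht : t ≤ |r|) :
    0 ≤ Real.sign r * (r - Real.sign r * t) := by
  rcases lt_trichotomy r 0 with h | rfl | h
  · rw [abs_of_neg h] at ht
    rw [Real.sign_of_neg h]
    linarith
  · simp
  · rw [abs_of_pos h] at ht
    rw [Real.sign_of_pos h]
    linarith

lemma inn_eq_dotProduct (x y : Fin n → ℝ) : inn x y = x ⬝ᵥ y := rfl

lemma ee_eq_single (hn : 0 < n) {j : ℕ} (hj : 1 ≤ j) :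
    ee n j = Pi.single ⟨(j - 1) % n, Nat.mod_lt _ hn⟩ 1 := by
  funext i
  have hi : ((i : ℕ) + 1) % n = j % n ↔ (i : ℕ) = (j - 1) % n := by
    obtain ⟨k, rfl⟩ : ∃ k, j = k + 1 := ⟨j - 1, by omega⟩
    rw [Nat.add_sub_cancel]
    change Nat.ModEq n (i + 1) (k + 1) ↔ _
    have hmod : (i : ℕ) ≡ k [MOD n] ↔ (i : ℕ) = k % n := by
      rw [Nat.ModEq, Nat.mod_eq_of_lt i.isLt]
    exact ⟨fun h => hmod.1 (h.add_right_cancel' 1), fun h => (hmod.2 h).add_right 1⟩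
  simp [ee, Pi.single_apply, Fin.ext_iff, hi]

lemma coord_eq_inn_ee_sub (hn : 0 < n) (α : ℝ) (x : Fin n → ℝ) {j : ℕ} (hj : 1 ≤ j) :
    coord α x j = inn (ee n j) x - 2 * π / α * ((j - 1) / n : ℕ) := by
  rw [coord, dif_pos hn, inn_eq_dotProduct, ee_eq_single hn hj, single_one_dotProduct]

lemma coord_add_self (hn : 0 < n) (α : ℝ) (x : Fin n → ℝ) {j : ℕ} (hj : 1 ≤ j) :
    coord α x (j + n) = coord α x j - 2 * π / α := by
  simp only [coord, dif_pos hn, show j + n - 1 = j - 1 + n by omega, Nat.add_mod_right,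
    Nat.add_div_right _ hn]
  push_cast
  ring

lemma sum_Icc_add_of_add_period (f : ℕ → ℝ) (c : ℝ) (hf : ∀ j, 1 ≤ j → f (j + n) = f j - c)
    (p : ℕ) : ∑ j ∈ Icc 1 n, f (j + p) = ∑ j ∈ Icc 1 n, f j - p * c := by
  simp only [← Finset.Ico_add_one_right_eq_Icc, Finset.sum_Ico_eq_sum_range, Nat.add_sub_cancel]
  induction p with
  | zero => simp
  | succ p ih =>
    have hshift := Finset.sum_range_succ' (fun k => f (1 + k + p)) n
    rw [Finset.sum_range_succ, show 1 + n + p = 1 + p + n by omega, hf _ (by omega),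
      add_zero] at hshift
    simp only [show ∀ k, 1 + k + (p + 1) = 1 + (k + 1) + p from fun k => by omega]
    push_cast
    linarith

lemma sum_coord_sub_coord_add (hn : 0 < n) (α : ℝ) (x : Fin n → ℝ) (p : ℕ) :
    ∑ j ∈ Icc 1 n, (coord α x j - coord α x (j + p)) = p * (2 * π / α) := by
  rw [Finset.sum_sub_distrib,
    sum_Icc_add_of_add_period _ _ (fun j hj => coord_add_self hn α x hj)]
  ring

lemma coord_sub_coord_add {p j : ℕ} (hp : p ≤ n) (hj1 : 1 ≤ j) (hjn : j ≤ n) (α : ℝ)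
    (x : Fin n → ℝ) :
    coord α x j - coord α x (j + p) = inn (aa n p j) x + if n < j + p then 2 * π / α else 0 := by
  have hn : 0 < n := by omega
  rw [coord_eq_inn_ee_sub hn α x hj1, coord_eq_inn_ee_sub hn α x (by omega : 1 ≤ j + p), aa,
    inn_eq_dotProduct, inn_eq_dotProduct, inn_eq_dotProduct, sub_dotProduct,
    Nat.div_eq_of_lt (by omega : j - 1 < n)]
  split_ifs with h
  · rw [Nat.div_eq_of_lt_le (k := 1) (by omega) (by omega)]
    push_cast
    ring
  · rw [Nat.div_eq_of_lt (by omega : j + p - 1 < n)]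
    push_cast
    ring

lemma inn_sum_smul_of_dual {ι : Type*} [DecidableEq ι] (a : Fin n → ℝ) (ω : ι → Fin n → ℝ)
    (S : Finset ι) (c : ι → ℝ) {j : ι} (ha : ∀ k ∈ S, inn a (ω k) = if j = k then 1 else 0) :
    inn a (∑ k ∈ S, c k • ω k) = if j ∈ S then c j else 0 := by
  simp only [inn_eq_dotProduct, dotProduct_sum, dotProduct_smul, smul_eq_mul]
  rw [Finset.sum_congr rfl fun k hk => by rw [← inn_eq_dotProduct, ha k hk]]
  simp

lemma sum_apply_sum_smul_eq_zero {ι : Type*} (ω : ι → Fin n → ℝ) (S : Finset ι) (c : ι → ℝ)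
    (hω : ∀ k ∈ S, ∑ i, ω k i = 0) : ∑ i, (∑ k ∈ S, c k • ω k) i = 0 := by
  simp only [Finset.sum_apply, Pi.smul_apply, smul_eq_mul]
  rw [Finset.sum_comm]
  exact Finset.sum_eq_zero fun k hk => by rw [← Finset.mul_sum, hω k hk, mul_zero]

lemma rhoP_add_sum_smul {p : ℕ} (hp1 : 1 ≤ p) (hpn : p ≤ n) (α g : ℝ) (ω : ℕ → Fin n → ℝ)
    (c : ℕ → ℝ) :
    rhoP n p α g ω + ∑ k ∈ Icc 1 (n - 1), c k • ω k =
      ∑ k ∈ Icc 1 (n - 1), ((if n < k + p then g - 2 * π / α else g) + c k) • ω k := by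
  have hρ : rhoP n p α g ω =
      ∑ k ∈ Icc 1 (n - 1), (if n < k + p then g - 2 * π / α else g) • ω k := by
    simp only [ite_smul, Finset.sum_ite, rhoP, Finset.smul_sum]
    rw [add_comm]
    congr 2 <;> ext k <;> simp only [Finset.mem_filter, Finset.mem_Icc] <;> omega
  simp only [hρ, add_smul, Finset.sum_add_distrib]

lemma coord_sub_coord_add_sub_eq_of_eq_rhoP_add {p j : ℕ} (hp1 : 1 ≤ p) (hpn : p ≤ n)
    (hj : j ∈ Icc 1 (n - 1)) (α g : ℝ) (ω : ℕ → Fin n → ℝ)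
    (hω : ∀ k ∈ Icc 1 (n - 1), inn (aa n p j) (ω k) = if j = k then 1 else 0)
    (c : ℕ → ℝ) (x : Fin n → ℝ) (hx : x = rhoP n p α g ω + ∑ k ∈ Icc 1 (n - 1), c k • ω k) :
    coord α x j - coord α x (j + p) - g = c j := by
  have hj' := Finset.mem_Icc.1 hj
  rw [coord_sub_coord_add hpn hj'.1 (by omega), hx, rhoP_add_sum_smul hp1 hpn,
    inn_sum_smul_of_dual _ _ _ _ hω, if_pos hj]
  split_ifs <;> ring

lemma coord_sub_coord_add_self_sub (hn : 0 < n) (p : ℕ) (α g : ℝ) (x : Fin n → ℝ) :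
    coord α x n - coord α x (n + p) - g =
      2 * π * p / α - n * g - ∑ j ∈ Icc 1 (n - 1), (coord α x j - coord α x (j + p) - g) := by
  have hsplit := Finset.sum_Icc_succ_top (show 1 ≤ n - 1 + 1 by omega)
    fun j => coord α x j - coord α x (j + p)
  rw [Nat.sub_add_cancel hn, sum_coord_sub_coord_add hn α x p] at hsplit
  rw [Finset.sum_sub_distrib, Finset.sum_const, Nat.card_Icc, nsmul_eq_mul, Nat.add_sub_cancel,
    Nat.cast_sub hn, Nat.cast_one]
  linear_combination -hsplit

theorem statement1_general (n p : ℕ) (α g : ℝ)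
    (hp1 : 1 ≤ p) (hpn : p ≤ n - 1)
    (ω : ℕ → Fin n → ℝ)
    (hωE : ∀ k : ℕ, 1 ≤ k → k ≤ n - 1 → ∑ i, ω k i = 0)
    (hωδ : ∀ j : ℕ, 1 ≤ j → j ≤ n - 1 → ∀ k : ℕ, 1 ≤ k → k ≤ n - 1 →
      inn (aa n p j) (ω k) = if j = k then (1 : ℝ) else 0) :
    ∀ μ ∈ Lam n |2 * π * p / α - n * g| ω,
      rhoP n p α g ω + Real.sign (2 * π * p / α - n * g) • μ ∈ SigmaBar n p α g := by
  rintro μ ⟨m, hm, rfl⟩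
  set s := Real.sign (2 * π * p / α - n * g)
  rw [Finset.smul_sum]
  simp only [smul_smul]
  set x := rhoP n p α g ω + ∑ k ∈ Icc 1 (n - 1), (s * m k) • ω k with hx
  have hroot : ∀ j ∈ Icc 1 (n - 1), coord α x j - coord α x (j + p) - g = s * m j :=
    fun j hj => coord_sub_coord_add_sub_eq_of_eq_rhoP_add hp1 (by omega) hj α g ω
      (fun k hk => hωδ j (Finset.mem_Icc.1 hj).1 (Finset.mem_Icc.1 hj).2 k
        (Finset.mem_Icc.1 hk).1 (Finset.mem_Icc.1 hk).2) _ x hx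
  refine ⟨?_, fun j hj => ?_⟩
  · rw [hx, rhoP_add_sum_smul hp1 (by omega)]
    exact sum_apply_sum_smul_eq_zero _ _ _ fun k hk =>
      hωE k (Finset.mem_Icc.1 hk).1 (Finset.mem_Icc.1 hk).2
  obtain ⟨hj1, hjn⟩ := Finset.mem_Icc.1 hj
  rcases hjn.lt_or_eq with hjn | rfl
  · rw [hroot j (Finset.mem_Icc.2 ⟨hj1, by omega⟩)]
    exact Real.sign_mul_sign_mul_nonneg _ (Nat.cast_nonneg _)
  · rw [coord_sub_coord_add_self_sub (by omega), Finset.sum_congr rfl hroot, ← Finset.mul_sum]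
    exact Real.sign_mul_sub_sign_mul_nonneg hm

/-- every lattice point `ρ_p + sgn(M)μ` with `μ ∈ Λ⁺_{p,|M|}` belongs to the
simplex `Σ̄_{g,p}`. -/
theorem statement1 (n p : ℕ) (α g : ℝ)
    (hn : 2 ≤ n) (hα : 0 < α) (hp1 : 1 ≤ p) (hpn : p ≤ n - 1) (hcop : Nat.Coprime p n)
    (hM : 2 * π * p / α - n * g ≠ 0)
    (ω : ℕ → Fin n → ℝ)
    (hωE : ∀ k : ℕ, 1 ≤ k → k ≤ n - 1 → ∑ i, ω k i = 0)
    (hωδ : ∀ j : ℕ, 1 ≤ j → j ≤ n - 1 → ∀ k : ℕ, 1 ≤ k → k ≤ n - 1 →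
      inn (aa n p j) (ω k) = if j = k then (1 : ℝ) else 0) :
    ∀ μ ∈ Lam n |2 * π * p / α - n * g| ω,
      rhoP n p α g ω + Real.sign (2 * π * p / α - n * g) • μ ∈ SigmaBar n p α g :=
  statement1_general n p α g hp1 hpn ω hωE hωδ
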